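/- arXiv:1205.3407 — 3 statements merged into one kernel-verified Lean document; each statement's English description precedes it below -/
import Mathlib

section
/- Define g(x) = (x+1)·ln(x+1) − x·ln x for x > 0 and g(0) = 0. Then for every x ≥ 0, g(x/2) + ln 2 − ln(1 + e^{g(x)}) ≤ 0.06·ln 2. -/
/-- The von Neumann entropy (in nats) of a single-mode thermal bosonic state with mean
photon number `x`: `g(x) = (x+1)·ln(x+1) − x·ln x` (with `g(0) = 0`, which the formula
gives automatically since `Real.log 0 = 0`). -/
noncomputable def g (x : ℝ) : ℝ := (x + 1) * Real.log (x + 1) - x * Real.log x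

set_option maxHeartbeats 1000000
section AuxHalfGap

open Real



namespace HalfGap

/-- `Φ w = (1+w)·ln(1+w) − (1−w)·ln(1−w)` -/
noncomputable def Phi (w : ℝ) : ℝ := (1+w) * Real.log (1+w) - (1-w) * Real.log (1-w)

lemma Phi_continuous : Continuous Phi := by
  have h1 : Continuous fun w : ℝ => (1+w) * Real.log (1+w) :=
    Real.continuous_mul_log.comp (continuous_const.add continuous_id)
  have h2 : Continuous fun w : ℝ => (1-w) * Real.log (1-w) :=
    Real.continuous_mul_log.comp (continuous_const.sub continuous_id)
  exact h1.sub h2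

lemma Phi_hasDerivAt {s : ℝ} (h1 : -1 < s) (h2 : s < 1) :
    HasDerivAt Phi (2 + (Real.log (1+s) + Real.log (1-s))) s := by
  have hp : (0:ℝ) < 1 + s := by linarith
  have hm : (0:ℝ) < 1 - s := by linarith
  have d1 : HasDerivAt (fun w : ℝ => (1+w) * Real.log (1+w)) (Real.log (1+s) + 1) s := by
    have hin : HasDerivAt (fun w : ℝ => 1 + w) 1 s := by
      simpa using (hasDerivAt_id s).const_add 1
    have hlog : HasDerivAt (fun w : ℝ => Real.log (1+w)) (1/(1+s)) s := by
      exact ((Real.hasDerivAt_log hp.ne').comp s hin).congr_deriv (by simp)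
    have := hin.mul hlog
    refine this.congr_deriv (Eq.symm ?_)
    field_simp
  have d2 : HasDerivAt (fun w : ℝ => (1-w) * Real.log (1-w)) (-Real.log (1-s) - 1) s := by
    have hin : HasDerivAt (fun w : ℝ => 1 - w) (-1) s := by
      simpa using (hasDerivAt_id s).const_sub 1
    have hlog : HasDerivAt (fun w : ℝ => Real.log (1-w)) (-(1/(1-s))) s := by
      have := (Real.hasDerivAt_log hm.ne').comp s hin
      exact this.congr_deriv (by simp)
    have := hin.mul hlog
    refine this.congr_deriv (Eq.symm ?_)
    field_simp
    ring
  have := d1.sub d2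
  refine this.congr_deriv (Eq.symm ?_)
  ring

/-- identity: for `y > 0`, `g y = Φ(1/(2y+1))·(2y+1)/2 + log(y+1/2)` -/
lemma g_eq (y : ℝ) (hy : 0 < y) :
    g y = Phi (1/(2*y+1)) * ((2*y+1)/2) + Real.log (y + 1/2) := by
  have h1 : (0:ℝ) < 2*y+1 := by linarith
  have h2 : (0:ℝ) < 2*y+2 := by linarith
  have e1 : 1 + 1/(2*y+1) = (2*y+2)/(2*y+1) := by field_simp; ring
  have e2 : 1 - 1/(2*y+1) = (2*y)/(2*y+1) := by field_simp; ring
  have l1 : Real.log ((2*y+2)/(2*y+1)) = Real.log (2*y+2) - Real.log (2*y+1) :=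
    Real.log_div h2.ne' h1.ne'
  have l2 : Real.log ((2*y)/(2*y+1)) = Real.log (2*y) - Real.log (2*y+1) :=
    Real.log_div (by linarith) h1.ne'
  have l3 : Real.log (2*y+2) = Real.log 2 + Real.log (y+1) := by
    rw [← Real.log_mul (by norm_num) (by linarith)]; ring_nf
  have l4 : Real.log (2*y) = Real.log 2 + Real.log y := by
    rw [← Real.log_mul (by norm_num) hy.ne']
  have l5 : Real.log (y+1/2) = Real.log (2*y+1) - Real.log 2 := by
    rw [← Real.log_div h1.ne' (by norm_num)]; ring_nf
  unfold Phi g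
  rw [e1, e2, l1, l2, l3, l4, l5]
  field_simp
  ring

end HalfGap
open Real
namespace HalfGap

lemma le_of_deriv {f f' : ℝ → ℝ} {a b : ℝ} (hab : a ≤ b)
    (hc : ContinuousOn f (Set.Icc a b))
    (hd : ∀ s ∈ Set.Ioo a b, HasDerivAt f (f' s) s)
    (h0 : ∀ s ∈ Set.Ioo a b, 0 ≤ f' s) : f a ≤ f b := by
  have := monotoneOn_of_deriv_nonneg (convex_Icc a b) hc
    (fun u hu => by
      rw [interior_Icc] at hu
      exact (hd u hu).differentiableAt.differentiableWithinAt)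
    (fun u hu => by
      rw [interior_Icc] at hu
      rw [(hd u hu).deriv]; exact h0 u hu)
  exact this (Set.left_mem_Icc.2 hab) (Set.right_mem_Icc.2 hab) hab

lemma ge_of_deriv {f f' : ℝ → ℝ} {a b : ℝ} (hab : a ≤ b)
    (hc : ContinuousOn f (Set.Icc a b))
    (hd : ∀ s ∈ Set.Ioo a b, HasDerivAt f (f' s) s)
    (h0 : ∀ s ∈ Set.Ioo a b, f' s ≤ 0) : f b ≤ f a := by
  have := antitoneOn_of_deriv_nonpos (convex_Icc a b) hc
    (fun u hu => by
      rw [interior_Icc] at hu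
      exact (hd u hu).differentiableAt.differentiableWithinAt)
    (fun u hu => by
      rw [interior_Icc] at hu
      rw [(hd u hu).deriv]; exact h0 u hu)
  exact this (Set.left_mem_Icc.2 hab) (Set.right_mem_Icc.2 hab) hab

noncomputable def S10 (t : ℝ) : ℝ := t/6 + t^2/20 + t^3/42 + t^4/72 + t^5/110 + t^6/156 + t^7/210 + t^8/272 + t^9/342 + t^10/420
noncomputable def P10 (t : ℝ) : ℝ := t + t^2/2 + t^3/3 + t^4/4 + t^5/5 + t^6/6 + t^7/7 + t^8/8 + t^9/9 + t^10/10

lemma hasDerivAt_log_one_sub {u : ℝ} (hu : u < 1) :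
    HasDerivAt (fun s : ℝ => Real.log (1-s)) (-(1/(1-u))) u := by
  have hin : HasDerivAt (fun s : ℝ => 1 - s) (-1) u := by
    simpa using (hasDerivAt_id u).const_sub 1
  have := (Real.hasDerivAt_log (by intro hc; rw [sub_eq_zero] at hc; exact absurd hc.symm hu.ne : (1:ℝ)-u ≠ 0)).comp u hin
  exact this.congr_deriv (by simp)

/-- `log(1−t) ≤ −P10 t` on `[0,1)` -/
lemma L1 {t : ℝ} (h0 : 0 ≤ t) (h1 : t < 1) : Real.log (1-t) ≤ -P10 t := by
  have key := le_of_deriv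
    (f := fun u : ℝ => -(u + u^2/2 + u^3/3 + u^4/4 + u^5/5 + u^6/6 + u^7/7 + u^8/8 + u^9/9 + u^10/10) - Real.log (1-u))
    (f' := fun u : ℝ => -(1 + u + u^2 + u^3 + u^4 + u^5 + u^6 + u^7 + u^8 + u^9) + 1/(1-u))
    h0 ?_ ?_ ?_
  · norm_num at key
    simp only [P10]
    linarith
  · apply ContinuousOn.sub (by fun_prop)
    apply ContinuousOn.log (by fun_prop)
    intro u hu
    simp only [Set.mem_Icc] at hu
    have : u < 1 := lt_of_le_of_lt hu.2 h1
    intro hc; nlinarith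
  · intro s hs
    simp only [Set.mem_Ioo] at hs
    have hs1 : s < 1 := hs.2.trans h1
    have hP : HasDerivAt (fun u : ℝ => u + u^2/2 + u^3/3 + u^4/4 + u^5/5 + u^6/6 + u^7/7 + u^8/8 + u^9/9 + u^10/10)
        (1 + s + s^2 + s^3 + s^4 + s^5 + s^6 + s^7 + s^8 + s^9) s := by
      have h := ((((((((((hasDerivAt_id s).add ((hasDerivAt_pow 2 s).div_const 2)).add ((hasDerivAt_pow 3 s).div_const 3)).add ((hasDerivAt_pow 4 s).div_const 4)).add ((hasDerivAt_pow 5 s).div_const 5)).add ((hasDerivAt_pow 6 s).div_const 6)).add ((hasDerivAt_pow 7 s).div_const 7)).add ((hasDerivAt_pow 8 s).div_const 8)).add ((hasDerivAt_pow 9 s).div_const 9)).add ((hasDerivAt_pow 10 s).div_const 10))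
      refine h.congr_deriv (Eq.symm ?_)
      norm_num
    have := (hP.neg).sub (hasDerivAt_log_one_sub hs1)
    refine this.congr_deriv (Eq.symm ?_)
    ring
  · intro s hs
    simp only [Set.mem_Ioo] at hs
    have hs1 : s < 1 := hs.2.trans h1
    have hpos : (0:ℝ) < 1 - s := by linarith
    show (0:ℝ) ≤ -(1 + s + s^2 + s^3 + s^4 + s^5 + s^6 + s^7 + s^8 + s^9) + 1/(1-s)
    have : (1 + s + s^2 + s^3 + s^4 + s^5 + s^6 + s^7 + s^8 + s^9) ≤ 1/(1-s) := by
      rw [le_div_iff₀ hpos]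
      nlinarith [pow_nonneg hs.1.le 10]
    linarith

/-- `−log(1−t) ≤ Σ_{k≤15} t^k/k + t^16/(16(1−t))` on `[0,1)` -/
lemma L2 {t : ℝ} (h0 : 0 ≤ t) (h1 : t < 1) :
    -Real.log (1-t) ≤ (t + t^2/2 + t^3/3 + t^4/4 + t^5/5 + t^6/6 + t^7/7 + t^8/8 + t^9/9
      + t^10/10 + t^11/11 + t^12/12 + t^13/13 + t^14/14 + t^15/15) + t^16/(16*(1-t)) := by
  have key := le_of_deriv
    (f := fun u : ℝ => (u + u^2/2 + u^3/3 + u^4/4 + u^5/5 + u^6/6 + u^7/7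
      + u^8/8 + u^9/9 + u^10/10 + u^11/11 + u^12/12 + u^13/13 + u^14/14 + u^15/15)
      + u^16/(16*(1-u)) + Real.log (1-u))
    (f' := fun u : ℝ => u^16/(16*(1-u)^2))
    h0 ?_ ?_ ?_
  · norm_num at key
    linarith
  · apply ContinuousOn.add
    apply ContinuousOn.add (by fun_prop)
    · apply ContinuousOn.div (by fun_prop) (by fun_prop)
      intro u hu
      simp only [Set.mem_Icc] at hu
      have : u < 1 := lt_of_le_of_lt hu.2 h1
      intro hc; nlinarith
    · apply ContinuousOn.log (by fun_prop)
      intro u hu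
      simp only [Set.mem_Icc] at hu
      have : u < 1 := lt_of_le_of_lt hu.2 h1
      intro hc; nlinarith
  · intro s hs
    simp only [Set.mem_Ioo] at hs
    have hs1 : s < 1 := hs.2.trans h1
    have hpos : (0:ℝ) < 1 - s := by linarith
    have hden : (16*((1:ℝ)-s)) ≠ 0 := by positivity
    have hP : HasDerivAt (fun u : ℝ => u + u^2/2 + u^3/3 + u^4/4 + u^5/5 + u^6/6 + u^7/7
        + u^8/8 + u^9/9 + u^10/10 + u^11/11 + u^12/12 + u^13/13 + u^14/14 + u^15/15)
        (1 + s + s^2 + s^3 + s^4 + s^5 + s^6 + s^7 + s^8 + s^9 + s^10 + s^11 + s^12 + s^13 + s^14) s := by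
      have h := (((((((((((((((hasDerivAt_id s).add ((hasDerivAt_pow 2 s).div_const 2)).add ((hasDerivAt_pow 3 s).div_const 3)).add ((hasDerivAt_pow 4 s).div_const 4)).add ((hasDerivAt_pow 5 s).div_const 5)).add ((hasDerivAt_pow 6 s).div_const 6)).add ((hasDerivAt_pow 7 s).div_const 7)).add ((hasDerivAt_pow 8 s).div_const 8)).add ((hasDerivAt_pow 9 s).div_const 9)).add ((hasDerivAt_pow 10 s).div_const 10)).add ((hasDerivAt_pow 11 s).div_const 11)).add ((hasDerivAt_pow 12 s).div_const 12)).add ((hasDerivAt_pow 13 s).div_const 13)).add ((hasDerivAt_pow 14 s).div_const 14)).add ((hasDerivAt_pow 15 s).div_const 15))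
      refine h.congr_deriv (Eq.symm ?_)
      norm_num
    have hQ : HasDerivAt (fun u : ℝ => u^16/(16*(1-u)))
        ((16*s^15*(16*(1-s)) - s^16*(-16))/(16*(1-s))^2) s := by
      have hnum : HasDerivAt (fun u : ℝ => u^16) (16*s^15) s := by
        simpa using hasDerivAt_pow 16 s
      have hde : HasDerivAt (fun u : ℝ => 16*(1-u)) (-16) s := by
        have h2 : HasDerivAt (fun u : ℝ => 1-u) (-1) s := by
          simpa using (hasDerivAt_id s).const_sub 1
        have := h2.const_mul (16:ℝ)
        refine this.congr_deriv (Eq.symm ?_)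
        ring
      exact hnum.div hde hden
    have := (hP.add hQ).add (hasDerivAt_log_one_sub hs1)
    refine this.congr_deriv (Eq.symm ?_)
    field_simp
    ring
  · intro s hs
    have hs1 : s < 1 := hs.2.trans h1
    have hpos : (0:ℝ) < 1 - s := by linarith
    positivity

end HalfGap

namespace HalfGap

noncomputable def poly21 (w : ℝ) : ℝ := 2*w - w^3/3 - w^5/10 - w^7/21 - w^9/36 - w^11/55 - w^13/78 - w^15/105 - w^17/136 - w^19/171 - w^21/210
noncomputable def chi (t : ℝ) : ℝ := Real.log (1-t) + P10 t + (10718/10000)*t^11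
noncomputable def D2 (s : ℝ) : ℝ := Phi s - poly21 s + (233/5000)*s^23

lemma hasDerivAt_poly21 (s : ℝ) : HasDerivAt poly21 (2 - P10 (s^2)) s := by
  have h := ((((((((((((hasDerivAt_id s).const_mul 2).sub ((hasDerivAt_pow 3 s).div_const 3)).sub ((hasDerivAt_pow 5 s).div_const 10)).sub ((hasDerivAt_pow 7 s).div_const 21)).sub ((hasDerivAt_pow 9 s).div_const 36)).sub ((hasDerivAt_pow 11 s).div_const 55)).sub ((hasDerivAt_pow 13 s).div_const 78)).sub ((hasDerivAt_pow 15 s).div_const 105)).sub ((hasDerivAt_pow 17 s).div_const 136)).sub ((hasDerivAt_pow 19 s).div_const 171)).sub ((hasDerivAt_pow 21 s).div_const 210))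
  refine h.congr_deriv (Eq.symm ?_)
  simp only [P10]
  push_cast
  ring

lemma poly21_cont : Continuous poly21 := by unfold poly21; fun_prop

lemma log_one_sub_sq {s : ℝ} (h1 : -1 < s) (h2 : s < 1) :
    Real.log (1-s^2) = Real.log (1+s) + Real.log (1-s) := by
  have e : (1:ℝ) - s^2 = (1+s)*(1-s) := by ring
  rw [e, Real.log_mul (by linarith) (by linarith)]

lemma hasDerivAt_D2 {s : ℝ} (h1 : -1 < s) (h2 : s < 1) :
    HasDerivAt D2 (chi (s^2)) s := by
  have hΦ := Phi_hasDerivAt h1 h2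
  have hp := hasDerivAt_poly21 s
  have hpow := (hasDerivAt_pow 23 s).const_mul ((233:ℝ)/5000)
  have H := (hΦ.sub hp).add hpow
  refine H.congr_deriv (Eq.symm ?_)
  unfold chi
  rw [log_one_sub_sq h1 h2]
  simp only [P10]
  ring

/-- Lemma (I): upper bound for Φ -/
lemma Phi_le {w : ℝ} (h0 : 0 ≤ w) (h1 : w < 1) : Phi w ≤ 2*w*(1 - S10 (w^2)) := by
  have key := le_of_deriv (f := fun s => poly21 s - Phi s)
    (f' := fun s => -P10 (s^2) - (Real.log (1+s) + Real.log (1-s)))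
    h0 ((poly21_cont.sub Phi_continuous).continuousOn) ?_ ?_
  · have e0 : poly21 0 - Phi 0 = 0 := by simp [poly21, Phi]
    simp only [e0] at key
    have : poly21 w = 2*w*(1 - S10 (w^2)) := by simp only [poly21, S10]; ring
    linarith
  · intro s hs
    simp only [Set.mem_Ioo] at hs
    have hs1 : s < 1 := hs.2.trans h1
    have := (hasDerivAt_poly21 s).sub (Phi_hasDerivAt (by linarith) hs1)
    refine this.congr_deriv (Eq.symm ?_)
    ring
  · intro s hs
    simp only [Set.mem_Ioo] at hs
    have hs1 : s < 1 := hs.2.trans h1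
    have hsq0 : (0:ℝ) ≤ s^2 := sq_nonneg s
    have hsq1 : s^2 < 1 := by nlinarith
    have hlog := L1 hsq0 hsq1
    rw [log_one_sub_sq (by linarith : (-1:ℝ) < s) hs1] at hlog
    show (0:ℝ) ≤ -P10 (s^2) - (Real.log (1+s) + Real.log (1-s))
    linarith

lemma chi_nonneg {t : ℝ} (h0 : 0 ≤ t) (h1 : t ≤ 23/25) : 0 ≤ chi t := by
  have hL2 := L2 h0 (lt_of_le_of_lt h1 (by norm_num))
  have h16 : t^16/(16*(1-t)) ≤ (25/32)*t^16 := by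
    rw [div_le_iff₀ (by nlinarith : (0:ℝ) < 16*(1-t))]
    nlinarith [pow_nonneg h0 16]
  have hb : 1/11 + t/12 + t^2/13 + t^3/14 + t^4/15 + (25/32)*t^5 ≤ 10718/10000 := by
    nlinarith [pow_le_pow_left₀ h0 h1 2, pow_le_pow_left₀ h0 h1 3,
      pow_le_pow_left₀ h0 h1 4, pow_le_pow_left₀ h0 h1 5]
  have hm := mul_le_mul_of_nonneg_left hb (pow_nonneg h0 11)
  unfold chi P10
  nlinarith [hm, hL2, h16]

lemma chi_anti {t1 t2 : ℝ} (ha : 23/25 ≤ t1) (hb : t1 ≤ t2) (hc : t2 < 1) : chi t2 ≤ chi t1 := by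
  have key := ge_of_deriv
    (f := fun u : ℝ => Real.log (1-u) + (u + u^2/2 + u^3/3 + u^4/4 + u^5/5 + u^6/6 + u^7/7
      + u^8/8 + u^9/9 + u^10/10) + (10718/10000)*u^11)
    (f' := fun s : ℝ => (-(1/(1-s)) + (1 + s + s^2 + s^3 + s^4 + s^5 + s^6 + s^7 + s^8 + s^9))
      + (117898/10000)*s^10)
    hb ?_ ?_ ?_
  · simp only [chi, P10]
    exact key
  · apply ContinuousOn.add
    apply ContinuousOn.add
    · apply ContinuousOn.log (by fun_prop)
      intro u hu
      simp only [Set.mem_Icc] at hu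
      have : u < 1 := lt_of_le_of_lt hu.2 hc
      intro hq; nlinarith
    · fun_prop
    · fun_prop
  · intro s hs
    simp only [Set.mem_Ioo] at hs
    have hs1 : s < 1 := hs.2.trans hc
    have hP : HasDerivAt (fun u : ℝ => u + u^2/2 + u^3/3 + u^4/4 + u^5/5 + u^6/6 + u^7/7 + u^8/8 + u^9/9 + u^10/10)
        (1 + s + s^2 + s^3 + s^4 + s^5 + s^6 + s^7 + s^8 + s^9) s := by
      have h := ((((((((((hasDerivAt_id s).add ((hasDerivAt_pow 2 s).div_const 2)).add ((hasDerivAt_pow 3 s).div_const 3)).add ((hasDerivAt_pow 4 s).div_const 4)).add ((hasDerivAt_pow 5 s).div_const 5)).add ((hasDerivAt_pow 6 s).div_const 6)).add ((hasDerivAt_pow 7 s).div_const 7)).add ((hasDerivAt_pow 8 s).div_const 8)).add ((hasDerivAt_pow 9 s).div_const 9)).add ((hasDerivAt_pow 10 s).div_const 10))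
      refine h.congr_deriv (Eq.symm ?_)
      norm_num
    have hd := ((hasDerivAt_log_one_sub hs1).add hP).add
      ((hasDerivAt_pow 11 s).const_mul ((10718:ℝ)/10000))
    refine hd.congr_deriv (Eq.symm ?_)
    push_cast
    ring
  · intro s hs
    simp only [Set.mem_Ioo] at hs
    have hs0 : (23:ℝ)/25 < s := lt_of_le_of_lt ha hs.1
    have hs1 : s < 1 := hs.2.trans hc
    have hpos : (0:ℝ) < 1 - s := by linarith
    have hs10 : (0:ℝ) ≤ s^10 := by positivity
    show (-(1/(1-s)) + (1 + s + s^2 + s^3 + s^4 + s^5 + s^6 + s^7 + s^8 + s^9))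
      + (117898/10000)*s^10 ≤ 0
    have hgeo : (1 + s + s^2 + s^3 + s^4 + s^5 + s^6 + s^7 + s^8 + s^9) = (1-s^10)/(1-s) := by
      rw [eq_div_iff hpos.ne']
      ring
    have h125 : (25:ℝ)/2 ≤ 1/(1-s) := by
      rw [le_div_iff₀ hpos]
      nlinarith
    rw [hgeo]
    have e : -(1/(1-s)) + (1-s^10)/(1-s) = -(s^10 * (1/(1-s))) := by
      field_simp
      ring
    rw [e]
    nlinarith [mul_le_mul_of_nonneg_left h125 hs10]

lemma D2_cont : Continuous D2 := by
  unfold D2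
  exact (Phi_continuous.sub poly21_cont).add (by fun_prop)

lemma D2_zero : D2 0 = 0 := by simp [D2, Phi, poly21]

lemma D2_one : 0 ≤ D2 1 := by
  have hΦ : Phi 1 = 2 * Real.log 2 := by
    norm_num [Phi]
  have h2 := Real.log_two_gt_d9
  simp only [D2, hΦ, poly21]
  norm_num
  nlinarith [h2]

/-- Lemma (II): lower bound for Φ -/
lemma Phi_ge {w : ℝ} (h0 : 0 ≤ w) (h1 : w ≤ 1) :
    2*w*(1 - S10 (w^2) - (233/10000)*w^22) ≤ Phi w := by
  have hpoly : poly21 w = 2*w*(1 - S10 (w^2)) := by simp only [poly21, S10]; ring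
  suffices h : 0 ≤ D2 w by
    simp only [D2, hpoly] at h
    nlinarith [h]
  rcases eq_or_lt_of_le h1 with he | hw1
  · rw [he]; exact D2_one
  -- w < 1
  have hinc : ∀ b : ℝ, 0 ≤ b → b < 1 → (∀ s, 0 < s → s < b → 0 ≤ chi (s^2)) → 0 ≤ D2 b := by
    intro b hb0 hb1 hchi
    have key := le_of_deriv (f := D2) (f' := fun s => chi (s^2)) hb0
      D2_cont.continuousOn
      (fun s hs => hasDerivAt_D2 (by simp only [Set.mem_Ioo] at hs; linarith [hs.1])
        (by simp only [Set.mem_Ioo] at hs; linarith [hs.2]))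
      (fun s hs => by
        simp only [Set.mem_Ioo] at hs
        exact hchi s hs.1 hs.2)
    rw [D2_zero] at key
    exact key
  by_cases ht : w^2 ≤ 23/25
  · exact hinc w h0 hw1 (fun s hs0 hsw => chi_nonneg (sq_nonneg s)
      (le_trans (by nlinarith : s^2 ≤ w^2) ht))
  · push_neg at ht
    by_cases hχ : 0 ≤ chi (w^2)
    · refine hinc w h0 hw1 (fun s hs0 hsw => ?_)
      by_cases hs' : s^2 ≤ 23/25
      · exact chi_nonneg (sq_nonneg s) hs'
      · push_neg at hs'
        have : chi (w^2) ≤ chi (s^2) := chi_anti hs'.le (by nlinarith) (by nlinarith)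
        linarith
    · push_neg at hχ
      -- anchor at 1
      have key := ge_of_deriv (f := fun s => D2 s - s * chi (w^2))
        (f' := fun s => chi (s^2) - chi (w^2)) hw1.le
        ((D2_cont.sub (by fun_prop)).continuousOn) ?_ ?_
      · have := D2_one
        nlinarith [key]
      · intro s hs
        simp only [Set.mem_Ioo] at hs
        have h1s : -1 < s := by linarith [h0.trans hs.1.le]
        exact (hasDerivAt_D2 h1s hs.2).sub (by simpa using (hasDerivAt_id s).mul_const (chi (w^2)))
      · intro s hs
        simp only [Set.mem_Ioo] at hs
        have hws : w^2 ≤ s^2 := by nlinarith [h0.trans hs.1.le]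
        have : chi (s^2) ≤ chi (w^2) := chi_anti ht.le hws (by nlinarith)
        show chi (s^2) - chi (w^2) ≤ 0
        linarith

end HalfGap

namespace HalfGap

lemma exp_neg_le_quad {u : ℝ} (h : 0 ≤ u) : Real.exp (-u) ≤ 1 - u + u^2/2 := by
  have key := le_of_deriv (f := fun s : ℝ => 1 - s + s^2/2 - Real.exp (-s))
    (f' := fun s : ℝ => -1 + s + Real.exp (-s)) h ?_ ?_ ?_
  · norm_num at key; linarith
  · fun_prop
  · intro s _
    have he : HasDerivAt (fun s : ℝ => Real.exp (-s)) (-Real.exp (-s)) s := by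
      have := (Real.hasDerivAt_exp (-s)).comp s ((hasDerivAt_id s).neg)
      exact this.congr_deriv (by simp)
    have hp : HasDerivAt (fun s : ℝ => 1 - s + s^2/2) (-1 + s) s := by
      have := ((hasDerivAt_id s).const_sub 1).add ((hasDerivAt_pow 2 s).div_const 2)
      refine this.congr_deriv (Eq.symm ?_)
      norm_num
    have := hp.sub he
    refine this.congr_deriv (Eq.symm ?_)
    ring
  · intro s hs
    simp only [Set.mem_Ioo] at hs
    have := Real.add_one_le_exp (-s)
    show (0:ℝ) ≤ -1 + s + Real.exp (-s)
    linarith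

lemma exp_neg_ge_cubic {u : ℝ} (h : 0 ≤ u) : 1 - u + u^2/2 - u^3/6 ≤ Real.exp (-u) := by
  have key := le_of_deriv (f := fun s : ℝ => Real.exp (-s) - (1 - s + s^2/2 - s^3/6))
    (f' := fun s : ℝ => -Real.exp (-s) + (1 - s + s^2/2)) h ?_ ?_ ?_
  · norm_num at key; linarith
  · fun_prop
  · intro s _
    have he : HasDerivAt (fun s : ℝ => Real.exp (-s)) (-Real.exp (-s)) s := by
      have := (Real.hasDerivAt_exp (-s)).comp s ((hasDerivAt_id s).neg)
      exact this.congr_deriv (by simp)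
    have hp : HasDerivAt (fun s : ℝ => 1 - s + s^2/2 - s^3/6) (-1 + s - s^2/2) s := by
      have := (((hasDerivAt_id s).const_sub 1).add ((hasDerivAt_pow 2 s).div_const 2)).sub
        ((hasDerivAt_pow 3 s).div_const 6)
      refine this.congr_deriv (Eq.symm ?_)
      norm_num; ring
    have := he.sub hp
    refine this.congr_deriv (Eq.symm ?_)
    ring
  · intro s hs
    simp only [Set.mem_Ioo] at hs
    have := exp_neg_le_quad hs.1.le
    show (0:ℝ) ≤ -Real.exp (-s) + (1 - s + s^2/2)
    linarith

lemma exp_neg_le_quartic {u : ℝ} (h : 0 ≤ u) :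
    Real.exp (-u) ≤ 1 - u + u^2/2 - u^3/6 + u^4/24 := by
  have key := le_of_deriv (f := fun s : ℝ => 1 - s + s^2/2 - s^3/6 + s^4/24 - Real.exp (-s))
    (f' := fun s : ℝ => -1 + s - s^2/2 + s^3/6 + Real.exp (-s)) h ?_ ?_ ?_
  · norm_num at key; linarith
  · fun_prop
  · intro s _
    have he : HasDerivAt (fun s : ℝ => Real.exp (-s)) (-Real.exp (-s)) s := by
      have := (Real.hasDerivAt_exp (-s)).comp s ((hasDerivAt_id s).neg)
      exact this.congr_deriv (by simp)
    have hp : HasDerivAt (fun s : ℝ => 1 - s + s^2/2 - s^3/6 + s^4/24) (-1 + s - s^2/2 + s^3/6) s := by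
      have := ((((hasDerivAt_id s).const_sub 1).add ((hasDerivAt_pow 2 s).div_const 2)).sub
        ((hasDerivAt_pow 3 s).div_const 6)).add ((hasDerivAt_pow 4 s).div_const 24)
      refine this.congr_deriv (Eq.symm ?_)
      norm_num; ring
    have := hp.sub he
    refine this.congr_deriv (Eq.symm ?_)
    ring
  · intro s hs
    simp only [Set.mem_Ioo] at hs
    have := exp_neg_ge_cubic hs.1.le
    show (0:ℝ) ≤ -1 + s - s^2/2 + s^3/6 + Real.exp (-s)
    linarith

noncomputable def uu (x : ℝ) : ℝ := S10 ((1/(x+1))^2)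
noncomputable def vv (x : ℝ) : ℝ := S10 ((1/(2*x+1))^2) + (233/10000)*(1/(2*x+1))^22

lemma S10_mono {a b : ℝ} (ha : 0 ≤ a) (hab : a ≤ b) : S10 a ≤ S10 b := by
  unfold S10
  gcongr <;> assumption

lemma S10_nonneg {a : ℝ} (ha : 0 ≤ a) : 0 ≤ S10 a := by
  unfold S10; positivity

lemma inv_sq_anti {x y : ℝ} (hx : 0 ≤ x) (hxy : x ≤ y) : (1/(y+1))^2 ≤ (1/(x+1))^2 := by
  have h1 : 1/(y+1) ≤ 1/(x+1) := by
    apply one_div_le_one_div_of_le <;> linarith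
  have h0 : (0:ℝ) ≤ 1/(y+1) := by
    apply div_nonneg (by norm_num)
    linarith
  exact pow_le_pow_left₀ h0 h1 2

lemma uu_anti {x y : ℝ} (hx : 0 ≤ x) (hxy : x ≤ y) : uu y ≤ uu x := by
  unfold uu
  exact S10_mono (by positivity) (inv_sq_anti hx hxy)

lemma vv_anti {x y : ℝ} (hx : 0 ≤ x) (hxy : x ≤ y) : vv y ≤ vv x := by
  unfold vv
  have hinv : 1/(2*y+1) ≤ 1/(2*x+1) := by
    apply one_div_le_one_div_of_le <;> linarith
  have h0 : (0:ℝ) ≤ 1/(2*y+1) := by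
    apply div_nonneg (by norm_num)
    linarith
  have hsq : (1/(2*y+1))^2 ≤ (1/(2*x+1))^2 := pow_le_pow_left₀ h0 hinv 2
  have h22 : (1/(2*y+1))^22 ≤ (1/(2*x+1))^22 := pow_le_pow_left₀ h0 hinv 22
  have := S10_mono (by positivity) hsq
  nlinarith [h22]

lemma uu_nonneg {x : ℝ} (hx : 0 ≤ x) : 0 ≤ uu x := S10_nonneg (by positivity)
lemma vv_nonneg {x : ℝ} (hx : 0 ≤ x) : 0 ≤ vv x := by
  have := S10_nonneg (a := (1/(2*x+1))^2) (by positivity)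
  unfold vv
  have h1 : (0:ℝ) < 2*x+1 := by linarith
  positivity

/-- A-side: `2·exp(g(x/2)) ≤ (x+1)·e·exp(−uu x)` -/
lemma A_bound {x : ℝ} (hx : 0 < x) :
    2*Real.exp (g (x/2)) ≤ (x+1) * (Real.exp 1 * Real.exp (-(uu x))) := by
  have hw0 : (0:ℝ) < 1/(x+1) := by positivity
  have hw1 : 1/(x+1) < 1 := by
    rw [div_lt_one (by linarith)]; linarith
  have hid := g_eq (x/2) (by linarith)
  have e1 : 2*(x/2)+1 = x+1 := by ring
  have e2 : x/2 + 1/2 = (x+1)/2 := by ring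
  rw [e1, e2] at hid
  have hP := Phi_le hw0.le hw1
  have hg : g (x/2) ≤ (1 - uu x) + Real.log ((x+1)/2) := by
    rw [hid]
    have h3 : Phi (1/(x+1)) * ((x+1)/2) ≤ 2*(1/(x+1))*(1 - S10 ((1/(x+1))^2)) * ((x+1)/2) := by
      apply mul_le_mul_of_nonneg_right hP (by linarith)
    have h4 : 2*(1/(x+1))*(1 - S10 ((1/(x+1))^2)) * ((x+1)/2) = 1 - uu x := by
      unfold uu
      field_simp
    linarith [h3, h4.symm.le]
  calc 2*Real.exp (g (x/2)) ≤ 2*Real.exp ((1 - uu x) + Real.log ((x+1)/2)) := by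
        have := Real.exp_le_exp.2 hg
        linarith
    _ = (x+1) * (Real.exp 1 * Real.exp (-(uu x))) := by
        rw [Real.exp_add, Real.exp_log (by linarith : (0:ℝ) < (x+1)/2)]
        rw [show (1:ℝ) - uu x = 1 + (-(uu x)) from by ring, Real.exp_add]
        ring

/-- B-side: `(x+1/2)·e·exp(−vv x) ≤ exp(g x)` -/
lemma B_bound {x : ℝ} (hx : 0 < x) :
    (x+1/2) * (Real.exp 1 * Real.exp (-(vv x))) ≤ Real.exp (g x) := by
  have h1 : (0:ℝ) < 2*x+1 := by linarith
  have hw0 : (0:ℝ) < 1/(2*x+1) := by positivity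
  have hw1 : 1/(2*x+1) ≤ 1 := by
    rw [div_le_one h1]; linarith
  have hid := g_eq x hx
  have hP := Phi_ge hw0.le hw1
  have hg : (1 - vv x) + Real.log (x+1/2) ≤ g x := by
    rw [hid]
    have h3 : 2*(1/(2*x+1))*(1 - S10 ((1/(2*x+1))^2) - (233/10000)*(1/(2*x+1))^22) * ((2*x+1)/2)
        ≤ Phi (1/(2*x+1)) * ((2*x+1)/2) := by
      apply mul_le_mul_of_nonneg_right hP (by linarith)
    have h4 : 2*(1/(2*x+1))*(1 - S10 ((1/(2*x+1))^2) - (233/10000)*(1/(2*x+1))^22) * ((2*x+1)/2)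
        = 1 - vv x := by
      unfold vv
      field_simp
      ring
    linarith [h3, h4.symm.le]
  calc (x+1/2) * (Real.exp 1 * Real.exp (-(vv x)))
      = Real.exp ((1 - vv x) + Real.log (x+1/2)) := by
        rw [Real.exp_add, Real.exp_log (by linarith : (0:ℝ) < x+1/2)]
        rw [show (1:ℝ) - vv x = 1 + (-(vv x)) from by ring, Real.exp_add]
        ring
    _ ≤ Real.exp (g x) := Real.exp_le_exp.2 hg

/-- master piece lemma -/
lemma piece {a b U V : ℝ} (ha : 0 ≤ a) (hU : 0 ≤ U) (hV : 0 ≤ V)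
    (hUb : U ≤ uu b) (hVa : vv a ≤ V)
    (h1 : (2.7182818286)*(a+1)*(1 - U + U^2/2 - U^3/6 + U^4/24) ≤
          (1.0424536)*(1 + (2.7182818283)*(a+1/2)*(1 - V + V^2/2 - V^3/6)))
    (h2 : (2.7182818286)*(b+1)*(1 - U + U^2/2 - U^3/6 + U^4/24) ≤
          (1.0424536)*(1 + (2.7182818283)*(b+1/2)*(1 - V + V^2/2 - V^3/6))) :
    ∀ x : ℝ, 0 < x → a ≤ x → x ≤ b →
      2*Real.exp (g (x/2)) ≤ (1.0424536)*(1 + Real.exp (g x)) := by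
  intro x hx0 hax hxb
  have hQ4 : Real.exp (-(uu x)) ≤ 1 - U + U^2/2 - U^3/6 + U^4/24 := by
    calc Real.exp (-(uu x)) ≤ Real.exp (-U) := by
          apply Real.exp_le_exp.2
          have : U ≤ uu x := hUb.trans (uu_anti hx0.le hxb)
          linarith
      _ ≤ _ := exp_neg_le_quartic hU
  have hQ3 : 1 - V + V^2/2 - V^3/6 ≤ Real.exp (-(vv x)) := by
    calc (1:ℝ) - V + V^2/2 - V^3/6 ≤ Real.exp (-V) := exp_neg_ge_cubic hV
      _ ≤ Real.exp (-(vv x)) := by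
          apply Real.exp_le_exp.2
          have : vv x ≤ V := (vv_anti ha hax).trans hVa
          linarith
  have hexp1 : Real.exp 1 ≤ 2.7182818286 := Real.exp_one_lt_d9.le
  have hexp2 : (2.7182818283:ℝ) ≤ Real.exp 1 := Real.exp_one_gt_d9.le
  have hL : 2*Real.exp (g (x/2)) ≤ (2.7182818286)*(x+1)*(1 - U + U^2/2 - U^3/6 + U^4/24) := by
    calc 2*Real.exp (g (x/2)) ≤ (x+1) * (Real.exp 1 * Real.exp (-(uu x))) := A_bound hx0
      _ ≤ (x+1) * (2.7182818286 * (1 - U + U^2/2 - U^3/6 + U^4/24)) := by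
          apply mul_le_mul_of_nonneg_left _ (by linarith)
          apply mul_le_mul hexp1 hQ4 (Real.exp_pos _).le (by norm_num)
      _ = (2.7182818286)*(x+1)*(1 - U + U^2/2 - U^3/6 + U^4/24) := by ring
  have hR : (2.7182818283)*(x+1/2)*(1 - V + V^2/2 - V^3/6) ≤ Real.exp (g x) := by
    calc (2.7182818283)*(x+1/2)*(1 - V + V^2/2 - V^3/6)
        = (x+1/2) * ((2.7182818283) * (1 - V + V^2/2 - V^3/6)) := by ring
      _ ≤ (x+1/2) * (Real.exp 1 * Real.exp (-(vv x))) := by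
          apply mul_le_mul_of_nonneg_left _ (by linarith)
          rcases le_or_gt (1 - V + V^2/2 - V^3/6) 0 with hneg | hpos
          · calc (2.7182818283) * (1 - V + V^2/2 - V^3/6) ≤ 0 := by nlinarith
              _ ≤ _ := by positivity
          · apply mul_le_mul hexp2 hQ3 hpos.le (Real.exp_pos _).le
      _ ≤ Real.exp (g x) := B_bound hx0
  have haffine : (2.7182818286)*(x+1)*(1 - U + U^2/2 - U^3/6 + U^4/24) ≤
      (1.0424536)*(1 + (2.7182818283)*(x+1/2)*(1 - V + V^2/2 - V^3/6)) := by
    rcases le_or_gt 0 ((2.7182818286)*(1 - U + U^2/2 - U^3/6 + U^4/24)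
        - (1.0424536)*(2.7182818283)*(1 - V + V^2/2 - V^3/6)) with hs | hs
    · have := mul_le_mul_of_nonneg_left hxb hs
      nlinarith [h2, this]
    · have := mul_le_mul_of_nonpos_left hax hs.le
      nlinarith [h1, this]
  calc 2*Real.exp (g (x/2)) ≤ (2.7182818286)*(x+1)*(1 - U + U^2/2 - U^3/6 + U^4/24) := hL
    _ ≤ (1.0424536)*(1 + (2.7182818283)*(x+1/2)*(1 - V + V^2/2 - V^3/6)) := haffine
    _ ≤ (1.0424536)*(1 + Real.exp (g x)) := by nlinarith [hR]

/-- tail lemma for `x ≥ 13/4` -/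
lemma tail (x : ℝ) (hx : (13/4:ℝ) ≤ x) :
    2*Real.exp (g (x/2)) ≤ (1.0424536)*(1 + Real.exp (g x)) := by
  have hx0 : (0:ℝ) < x := by linarith
  have hV : vv x ≤ 0.0029790 := by
    calc vv x ≤ vv (13/4) := vv_anti (by norm_num) hx
      _ ≤ 0.0029790 := by
          unfold vv S10
          norm_num
  have hL : 2*Real.exp (g (x/2)) ≤ (2.7182818286)*(x+1) := by
    calc 2*Real.exp (g (x/2)) ≤ (x+1) * (Real.exp 1 * Real.exp (-(uu x))) := A_bound hx0
      _ ≤ (x+1) * (2.7182818286 * 1) := by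
          apply mul_le_mul_of_nonneg_left _ (by linarith)
          apply mul_le_mul Real.exp_one_lt_d9.le _ (Real.exp_pos _).le (by norm_num)
          rw [Real.exp_le_one_iff]
          have := uu_nonneg hx0.le
          linarith
      _ = (2.7182818286)*(x+1) := by ring
  have hR : (2.7182818283)*(x+1/2)*(1 - 0.0029790 + 0.0029790^2/2 - 0.0029790^3/6)
      ≤ Real.exp (g x) := by
    calc (2.7182818283)*(x+1/2)*(1 - 0.0029790 + 0.0029790^2/2 - 0.0029790^3/6)
        = (x+1/2) * ((2.7182818283) * (1 - 0.0029790 + 0.0029790^2/2 - 0.0029790^3/6)) := by ring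
      _ ≤ (x+1/2) * (Real.exp 1 * Real.exp (-(vv x))) := by
          apply mul_le_mul_of_nonneg_left _ (by linarith)
          apply mul_le_mul Real.exp_one_gt_d9.le _ (by norm_num) (Real.exp_pos _).le
          calc (1:ℝ) - 0.0029790 + 0.0029790^2/2 - 0.0029790^3/6
              ≤ Real.exp (-(0.0029790:ℝ)) := exp_neg_ge_cubic (by norm_num)
            _ ≤ Real.exp (-(vv x)) := by
                apply Real.exp_le_exp.2
                linarith
      _ ≤ Real.exp (g x) := B_bound hx0
  nlinarith [hL, hR, hx]

end HalfGap

namespace HalfGap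

lemma main_core (x : ℝ) (hx0 : 0 < x) :
    2*Real.exp (g (x/2)) ≤ (1.0424536)*(1 + Real.exp (g x)) := by
  rcases le_or_gt x (13/4) with hle | hgt
  ·
    rcases le_or_gt x (2/125) with h1 | h1
    · exact piece (a := (0)) (b := (2/125)) (U := (265912339863/1000000000000)) (V := (153454774603/500000000000))
        (by norm_num) (by norm_num) (by norm_num)
        (by unfold uu S10; norm_num) (by unfold vv S10; norm_num)
        (by norm_num) (by norm_num) x hx0 hx0.le h1
    rcases le_or_gt x (4/125) with h2 | h2
    · exact piece (a := (2/125)) (b := (4/125)) (U := (250315191187/1000000000000)) (V := (52393449531/200000000000))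
        (by norm_num) (by norm_num) (by norm_num)
        (by unfold uu S10; norm_num) (by unfold vv S10; norm_num)
        (by norm_num) (by norm_num) x hx0 h1.le h2
    rcases le_or_gt x (6/125) with h3 | h3
    · exact piece (a := (4/125)) (b := (6/125)) (U := (236452339141/1000000000000)) (V := (57497199121/250000000000))
        (by norm_num) (by norm_num) (by norm_num)
        (by unfold uu S10; norm_num) (by unfold vv S10; norm_num)
        (by norm_num) (by norm_num) x hx0 h2.le h3
    rcases le_or_gt x (2/25) with h4 | h4
    · exact piece (a := (6/125)) (b := (2/25)) (U := (5321061033/25000000000)) (V := (6430868857/31250000000))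
        (by norm_num) (by norm_num) (by norm_num)
        (by unfold uu S10; norm_num) (by unfold vv S10; norm_num)
        (by norm_num) (by norm_num) x hx0 h3.le h4
    rcases le_or_gt x (14/125) with h5 | h5
    · exact piece (a := (2/25)) (b := (14/125)) (U := (19342289641/100000000000)) (V := (85388557161/500000000000))
        (by norm_num) (by norm_num) (by norm_num)
        (by unfold uu S10; norm_num) (by unfold vv S10; norm_num)
        (by norm_num) (by norm_num) x hx0 h4.le h5
    rcases le_or_gt x (18/125) with h6 | h6
    · exact piece (a := (14/125)) (b := (18/125)) (U := (35422703933/200000000000)) (V := (145949078073/1000000000000))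
        (by norm_num) (by norm_num) (by norm_num)
        (by unfold uu S10; norm_num) (by unfold vv S10; norm_num)
        (by norm_num) (by norm_num) x hx0 h5.le h6
    rcases le_or_gt x (22/125) with h7 | h7
    · exact piece (a := (18/125)) (b := (22/125)) (U := (40796061939/250000000000)) (V := (31762467323/250000000000))
        (by norm_num) (by norm_num) (by norm_num)
        (by unfold uu S10; norm_num) (by unfold vv S10; norm_num)
        (by norm_num) (by norm_num) x hx0 h6.le h7
    rcases le_or_gt x (26/125) with h8 | h8
    · exact piece (a := (22/125)) (b := (26/125)) (U := (151124332771/1000000000000)) (V := (22410405913/200000000000))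
        (by norm_num) (by norm_num) (by norm_num)
        (by unfold uu S10; norm_num) (by unfold vv S10; norm_num)
        (by norm_num) (by norm_num) x hx0 h7.le h8
    rcases le_or_gt x (6/25) with h9 | h9
    · exact piece (a := (26/125)) (b := (6/25)) (U := (140565199553/1000000000000)) (V := (99822023649/1000000000000))
        (by norm_num) (by norm_num) (by norm_num)
        (by unfold uu S10; norm_num) (by unfold vv S10; norm_num)
        (by norm_num) (by norm_num) x hx0 h8.le h9
    rcases le_or_gt x (34/125) with h10 | h10
    · exact piece (a := (6/25)) (b := (34/125)) (U := (131233441893/1000000000000)) (V := (44826237621/500000000000))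
        (by norm_num) (by norm_num) (by norm_num)
        (by unfold uu S10; norm_num) (by unfold vv S10; norm_num)
        (by norm_num) (by norm_num) x hx0 h9.le h10
    rcases le_or_gt x (38/125) with h11 | h11
    · exact piece (a := (34/125)) (b := (38/125)) (U := (24584255087/200000000000)) (V := (40534178603/500000000000))
        (by norm_num) (by norm_num) (by norm_num)
        (by unfold uu S10; norm_num) (by unfold vv S10; norm_num)
        (by norm_num) (by norm_num) x hx0 h10.le h11
    rcases le_or_gt x (42/125) with h12 | h12
    · exact piece (a := (38/125)) (b := (42/125)) (U := (115467407087/1000000000000)) (V := (9216780957/125000000000))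
        (by norm_num) (by norm_num) (by norm_num)
        (by unfold uu S10; norm_num) (by unfold vv S10; norm_num)
        (by norm_num) (by norm_num) x hx0 h11.le h12
    rcases le_or_gt x (44/125) with h13 | h13
    · exact piece (a := (42/125)) (b := (44/125)) (U := (22404283837/200000000000)) (V := (33702290409/500000000000))
        (by norm_num) (by norm_num) (by norm_num)
        (by unfold uu S10; norm_num) (by unfold vv S10; norm_num)
        (by norm_num) (by norm_num) x hx0 h12.le h13
    rcases le_or_gt x (46/125) with h14 | h14
    · exact piece (a := (44/125)) (b := (46/125)) (U := (869954401/8000000000)) (V := (32278419761/500000000000))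
        (by norm_num) (by norm_num) (by norm_num)
        (by unfold uu S10; norm_num) (by unfold vv S10; norm_num)
        (by norm_num) (by norm_num) x hx0 h13.le h14
    rcases le_or_gt x (48/125) with h15 | h15
    · exact piece (a := (46/125)) (b := (48/125)) (U := (105623958359/1000000000000)) (V := (15473642983/250000000000))
        (by norm_num) (by norm_num) (by norm_num)
        (by unfold uu S10; norm_num) (by unfold vv S10; norm_num)
        (by norm_num) (by norm_num) x hx0 h14.le h15
    rcases le_or_gt x (2/5) with h16 | h16
    · exact piece (a := (48/125)) (b := (2/5)) (U := (51324737419/500000000000)) (V := (29700608163/500000000000))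
        (by norm_num) (by norm_num) (by norm_num)
        (by unfold uu S10; norm_num) (by unfold vv S10; norm_num)
        (by norm_num) (by norm_num) x hx0 h15.le h16
    rcases le_or_gt x (52/125) with h17 | h17
    · exact piece (a := (2/5)) (b := (52/125)) (U := (99810958319/1000000000000)) (V := (11412422051/200000000000))
        (by norm_num) (by norm_num) (by norm_num)
        (by unfold uu S10; norm_num) (by unfold vv S10; norm_num)
        (by norm_num) (by norm_num) x hx0 h16.le h17
    rcases le_or_gt x (54/125) with h18 | h18
    · exact piece (a := (52/125)) (b := (54/125)) (U := (97099422229/1000000000000)) (V := (54864222539/1000000000000))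
        (by norm_num) (by norm_num) (by norm_num)
        (by unfold uu S10; norm_num) (by unfold vv S10; norm_num)
        (by norm_num) (by norm_num) x hx0 h17.le h18
    rcases le_or_gt x (56/125) with h19 | h19
    · exact piece (a := (54/125)) (b := (56/125)) (U := (47253339687/500000000000)) (V := (52795930379/1000000000000))
        (by norm_num) (by norm_num) (by norm_num)
        (by unfold uu S10; norm_num) (by unfold vv S10; norm_num)
        (by norm_num) (by norm_num) x hx0 h18.le h19
    rcases le_or_gt x (58/125) with h20 | h20
    · exact piece (a := (56/125)) (b := (58/125)) (U := (18405050297/200000000000)) (V := (25423416371/500000000000))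
        (by norm_num) (by norm_num) (by norm_num)
        (by unfold uu S10; norm_num) (by unfold vv S10; norm_num)
        (by norm_num) (by norm_num) x hx0 h19.le h20
    rcases le_or_gt x (12/25) with h21 | h21
    · exact piece (a := (58/125)) (b := (12/25)) (U := (44824145589/500000000000)) (V := (49007593143/1000000000000))
        (by norm_num) (by norm_num) (by norm_num)
        (by unfold uu S10; norm_num) (by unfold vv S10; norm_num)
        (by norm_num) (by norm_num) x hx0 h20.le h21
    rcases le_or_gt x (62/125) with h22 | h22
    · exact piece (a := (12/25)) (b := (62/125)) (U := (43684757171/500000000000)) (V := (47269806457/1000000000000))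
        (by norm_num) (by norm_num) (by norm_num)
        (by unfold uu S10; norm_num) (by unfold vv S10; norm_num)
        (by norm_num) (by norm_num) x hx0 h21.le h22
    rcases le_or_gt x (64/125) with h23 | h23
    · exact piece (a := (62/125)) (b := (64/125)) (U := (2129578533/25000000000)) (V := (22812942743/500000000000))
        (by norm_num) (by norm_num) (by norm_num)
        (by unfold uu S10; norm_num) (by unfold vv S10; norm_num)
        (by norm_num) (by norm_num) x hx0 h22.le h23
    rcases le_or_gt x (66/125) with h24 | h24
    · exact piece (a := (64/125)) (b := (66/125)) (U := (41541922779/500000000000)) (V := (22034481947/500000000000))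
        (by norm_num) (by norm_num) (by norm_num)
        (by unfold uu S10; norm_num) (by unfold vv S10; norm_num)
        (by norm_num) (by norm_num) x hx0 h23.le h24
    rcases le_or_gt x (68/125) with h25 | h25
    · exact piece (a := (66/125)) (b := (68/125)) (U := (16213341721/200000000000)) (V := (1703712511/40000000000))
        (by norm_num) (by norm_num) (by norm_num)
        (by unfold uu S10; norm_num) (by unfold vv S10; norm_num)
        (by norm_num) (by norm_num) x hx0 h24.le h25
    rcases le_or_gt x (14/25) with h26 | h26
    · exact piece (a := (68/125)) (b := (14/25)) (U := (3956359027/50000000000)) (V := (41191768637/1000000000000))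
        (by norm_num) (by norm_num) (by norm_num)
        (by unfold uu S10; norm_num) (by unfold vv S10; norm_num)
        (by norm_num) (by norm_num) x hx0 h25.le h26
    rcases le_or_gt x (72/125) with h27 | h27
    · exact piece (a := (14/25)) (b := (72/125)) (U := (77261045071/1000000000000)) (V := (7972134199/200000000000))
        (by norm_num) (by norm_num) (by norm_num)
        (by unfold uu S10; norm_num) (by unfold vv S10; norm_num)
        (by norm_num) (by norm_num) x hx0 h26.le h27
    rcases le_or_gt x (74/125) with h28 | h28
    · exact piece (a := (72/125)) (b := (74/125)) (U := (18866097161/250000000000)) (V := (19297404049/500000000000))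
        (by norm_num) (by norm_num) (by norm_num)
        (by unfold uu S10; norm_num) (by unfold vv S10; norm_num)
        (by norm_num) (by norm_num) x hx0 h27.le h28
    rcases le_or_gt x (76/125) with h29 | h29
    · exact piece (a := (74/125)) (b := (76/125)) (U := (73733573029/1000000000000)) (V := (934746739/25000000000))
        (by norm_num) (by norm_num) (by norm_num)
        (by unfold uu S10; norm_num) (by unfold vv S10; norm_num)
        (by norm_num) (by norm_num) x hx0 h28.le h29
    rcases le_or_gt x (78/125) with h30 | h30
    · exact piece (a := (76/125)) (b := (78/125)) (U := (72065210921/1000000000000)) (V := (7248380977/200000000000))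
        (by norm_num) (by norm_num) (by norm_num)
        (by unfold uu S10; norm_num) (by unfold vv S10; norm_num)
        (by norm_num) (by norm_num) x hx0 h29.le h30
    rcases le_or_gt x (16/25) with h31 | h31
    · exact piece (a := (78/125)) (b := (16/25)) (U := (17614036041/250000000000)) (V := (17573643523/500000000000))
        (by norm_num) (by norm_num) (by norm_num)
        (by unfold uu S10; norm_num) (by unfold vv S10; norm_num)
        (by norm_num) (by norm_num) x hx0 h30.le h31
    rcases le_or_gt x (82/125) with h32 | h32
    · exact piece (a := (16/25)) (b := (82/125)) (U := (68903424273/1000000000000)) (V := (34102680393/1000000000000))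
        (by norm_num) (by norm_num) (by norm_num)
        (by unfold uu S10; norm_num) (by unfold vv S10; norm_num)
        (by norm_num) (by norm_num) x hx0 h31.le h32
    rcases le_or_gt x (84/125) with h33 | h33
    · exact piece (a := (82/125)) (b := (84/125)) (U := (33702147477/500000000000)) (V := (33105012317/1000000000000))
        (by norm_num) (by norm_num) (by norm_num)
        (by unfold uu S10; norm_num) (by unfold vv S10; norm_num)
        (by norm_num) (by norm_num) x hx0 h32.le h33
    rcases le_or_gt x (86/125) with h34 | h34
    · exact piece (a := (84/125)) (b := (86/125)) (U := (32978088201/500000000000)) (V := (32151448147/1000000000000))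
        (by norm_num) (by norm_num) (by norm_num)
        (by unfold uu S10; norm_num) (by unfold vv S10; norm_num)
        (by norm_num) (by norm_num) x hx0 h33.le h34
    rcases le_or_gt x (88/125) with h35 | h35
    · exact piece (a := (86/125)) (b := (88/125)) (U := (12911330229/200000000000)) (V := (31239368871/1000000000000))
        (by norm_num) (by norm_num) (by norm_num)
        (by unfold uu S10; norm_num) (by unfold vv S10; norm_num)
        (by norm_num) (by norm_num) x hx0 h34.le h35
    rcases le_or_gt x (18/25) with h36 | h36
    · exact piece (a := (88/125)) (b := (18/25)) (U := (63203451263/1000000000000)) (V := (30366351297/1000000000000))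
        (by norm_num) (by norm_num) (by norm_num)
        (by unfold uu S10; norm_num) (by unfold vv S10; norm_num)
        (by norm_num) (by norm_num) x hx0 h35.le h36
    rcases le_or_gt x (92/125) with h37 | h37
    · exact piece (a := (18/25)) (b := (92/125)) (U := (61894446829/1000000000000)) (V := (29530150369/1000000000000))
        (by norm_num) (by norm_num) (by norm_num)
        (by unfold uu S10; norm_num) (by unfold vv S10; norm_num)
        (by norm_num) (by norm_num) x hx0 h36.le h37
    rcases le_or_gt x (94/125) with h38 | h38
    · exact piece (a := (92/125)) (b := (94/125)) (U := (2425105417/40000000000)) (V := (7182170837/250000000000))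
        (by norm_num) (by norm_num) (by norm_num)
        (by unfold uu S10; norm_num) (by unfold vv S10; norm_num)
        (by norm_num) (by norm_num) x hx0 h37.le h38
    rcases le_or_gt x (96/125) with h39 | h39
    · exact piece (a := (94/125)) (b := (96/125)) (U := (59401132621/1000000000000)) (V := (5592003129/200000000000))
        (by norm_num) (by norm_num) (by norm_num)
        (by unfold uu S10; norm_num) (by unfold vv S10; norm_num)
        (by norm_num) (by norm_num) x hx0 h38.le h39
    rcases le_or_gt x (98/125) with h40 | h40
    · exact piece (a := (96/125)) (b := (98/125)) (U := (14553290829/250000000000)) (V := (27222348109/1000000000000))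
        (by norm_num) (by norm_num) (by norm_num)
        (by unfold uu S10; norm_num) (by unfold vv S10; norm_num)
        (by norm_num) (by norm_num) x hx0 h39.le h40
    rcases le_or_gt x (102/125) with h41 | h41
    · exact piece (a := (98/125)) (b := (102/125)) (U := (55946224759/1000000000000)) (V := (1657125349/62500000000))
        (by norm_num) (by norm_num) (by norm_num)
        (by unfold uu S10; norm_num) (by unfold vv S10; norm_num)
        (by norm_num) (by norm_num) x hx0 h40.le h41
    rcases le_or_gt x (106/125) with h42 | h42
    · exact piece (a := (102/125)) (b := (106/125)) (U := (430516177/8000000000)) (V := (393424283/15625000000))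
        (by norm_num) (by norm_num) (by norm_num)
        (by unfold uu S10; norm_num) (by unfold vv S10; norm_num)
        (by norm_num) (by norm_num) x hx0 h41.le h42
    rcases le_or_gt x (22/25) with h43 | h43
    · exact piece (a := (106/125)) (b := (22/25)) (U := (51807067387/1000000000000)) (V := (23944172563/1000000000000))
        (by norm_num) (by norm_num) (by norm_num)
        (by unfold uu S10; norm_num) (by unfold vv S10; norm_num)
        (by norm_num) (by norm_num) x hx0 h42.le h43
    rcases le_or_gt x (114/125) with h44 | h44
    · exact piece (a := (22/25)) (b := (114/125)) (U := (4991401147/100000000000)) (V := (11399595891/500000000000))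
        (by norm_num) (by norm_num) (by norm_num)
        (by unfold uu S10; norm_num) (by unfold vv S10; norm_num)
        (by norm_num) (by norm_num) x hx0 h43.le h44
    rcases le_or_gt x (118/125) with h45 | h45
    · exact piece (a := (114/125)) (b := (118/125)) (U := (48126499969/1000000000000)) (V := (21735550019/1000000000000))
        (by norm_num) (by norm_num) (by norm_num)
        (by unfold uu S10; norm_num) (by unfold vv S10; norm_num)
        (by norm_num) (by norm_num) x hx0 h44.le h45
    rcases le_or_gt x (122/125) with h46 | h46
    · exact piece (a := (118/125)) (b := (122/125)) (U := (23218275257/500000000000)) (V := (20745617417/1000000000000))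
        (by norm_num) (by norm_num) (by norm_num)
        (by unfold uu S10; norm_num) (by unfold vv S10; norm_num)
        (by norm_num) (by norm_num) x hx0 h45.le h46
    rcases le_or_gt x (126/125) with h47 | h47
    · exact piece (a := (122/125)) (b := (126/125)) (U := (4483694803/100000000000)) (V := (3964529993/200000000000))
        (by norm_num) (by norm_num) (by norm_num)
        (by unfold uu S10; norm_num) (by unfold vv S10; norm_num)
        (by norm_num) (by norm_num) x hx0 h46.le h47
    rcases le_or_gt x (134/125) with h48 | h48
    · exact piece (a := (126/125)) (b := (134/125)) (U := (10470808357/250000000000)) (V := (474016683/25000000000))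
        (by norm_num) (by norm_num) (by norm_num)
        (by unfold uu S10; norm_num) (by unfold vv S10; norm_num)
        (by norm_num) (by norm_num) x hx0 h47.le h48
    rcases le_or_gt x (142/125) with h49 | h49
    · exact piece (a := (134/125)) (b := (142/125)) (U := (3921986219/100000000000)) (V := (2174869127/125000000000))
        (by norm_num) (by norm_num) (by norm_num)
        (by unfold uu S10; norm_num) (by unfold vv S10; norm_num)
        (by norm_num) (by norm_num) x hx0 h48.le h49
    rcases le_or_gt x (6/5) with h50 | h50
    · exact piece (a := (142/125)) (b := (6/5)) (U := (36808998681/1000000000000)) (V := (1001523661/62500000000))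
        (by norm_num) (by norm_num) (by norm_num)
        (by unfold uu S10; norm_num) (by unfold vv S10; norm_num)
        (by norm_num) (by norm_num) x hx0 h49.le h50
    rcases le_or_gt x (166/125) with h51 | h51
    · exact piece (a := (6/5)) (b := (166/125)) (U := (6524577109/200000000000)) (V := (7403963207/500000000000))
        (by norm_num) (by norm_num) (by norm_num)
        (by unfold uu S10; norm_num) (by unfold vv S10; norm_num)
        (by norm_num) (by norm_num) x hx0 h50.le h51
    rcases le_or_gt x (182/125) with h52 | h52
    · exact piece (a := (166/125)) (b := (182/125)) (U := (29125199287/1000000000000)) (V := (12759427297/1000000000000))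
        (by norm_num) (by norm_num) (by norm_num)
        (by unfold uu S10; norm_num) (by unfold vv S10; norm_num)
        (by norm_num) (by norm_num) x hx0 h51.le h52
    rcases le_or_gt x (214/125) with h53 | h53
    · exact piece (a := (182/125)) (b := (214/125)) (U := (11824923653/500000000000)) (V := (444439089/40000000000))
        (by norm_num) (by norm_num) (by norm_num)
        (by unfold uu S10; norm_num) (by unfold vv S10; norm_num)
        (by norm_num) (by norm_num) x hx0 h52.le h53
    rcases le_or_gt x (278/125) with h54 | h54
    · exact piece (a := (214/125)) (b := (278/125)) (U := (16519889183/1000000000000)) (V := (1729893493/200000000000))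
        (by norm_num) (by norm_num) (by norm_num)
        (by unfold uu S10; norm_num) (by unfold vv S10; norm_num)
        (by norm_num) (by norm_num) x hx0 h53.le h54
    rcases le_or_gt x (406/125) with h55 | h55
    · exact piece (a := (278/125)) (b := (406/125)) (U := (1878728449/200000000000)) (V := (2836503361/500000000000))
        (by norm_num) (by norm_num) (by norm_num)
        (by unfold uu S10; norm_num) (by unfold vv S10; norm_num)
        (by norm_num) (by norm_num) x hx0 h54.le h55
    exact piece (a := (406/125)) (b := (13/4)) (U := (9384650907/1000000000000)) (V := (298209783/100000000000))
        (by norm_num) (by norm_num) (by norm_num)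
        (by unfold uu S10; norm_num) (by unfold vv S10; norm_num)
        (by norm_num) (by norm_num) x hx0 h55.le hle
  · exact tail x hgt.le

end HalfGap

end AuxHalfGap


/-- The paper's capacity upper bound for the `λ = 1/2` thermal noise channel exceeds the
Holevo lower bound by at most `0.06` bits: for every `x ≥ 0`,
`g(x/2) + ln 2 − ln(1 + e^{g(x)}) ≤ 0.06·ln 2`. -/
theorem half_transmissivity_gap_le :
    ∀ x : ℝ, 0 ≤ x →
      g (x / 2) + Real.log 2 - Real.log (1 + Real.exp (g x)) ≤ 0.06 * Real.log 2 := by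
  intro x hx
  rcases hx.eq_or_lt with rfl | hx0
  · have hg0 : g 0 = 0 := by simp [g]
    rw [show (0:ℝ)/2 = 0 by norm_num, hg0]
    rw [Real.exp_zero, show (1:ℝ)+1 = 2 by norm_num]
    have := Real.log_nonneg (by norm_num : (1:ℝ) ≤ 2)
    nlinarith
  · have key := HalfGap.main_core x hx0
    have h2 := Real.log_two_gt_d9
    have hq0 : (0:ℝ) ≤ 0.06 * Real.log 2 := by nlinarith
    have hC1 : (1.0424536:ℝ) ≤ Real.exp (0.06 * Real.log 2) := by
      have hq := Real.quadratic_le_exp_of_nonneg hq0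
      nlinarith
    have hpos2 : (0:ℝ) < 1 + Real.exp (g x) := by positivity
    have hlog := Real.log_le_log (by positivity : (0:ℝ) < 2*Real.exp (g (x/2))) key
    rw [Real.log_mul (by norm_num) (Real.exp_pos _).ne', Real.log_exp,
        Real.log_mul (by norm_num) hpos2.ne'] at hlog
    have hlogC : Real.log (1.0424536:ℝ) ≤ 0.06 * Real.log 2 := by
      calc Real.log (1.0424536:ℝ) ≤ Real.log (Real.exp (0.06*Real.log 2)) :=
            Real.log_le_log (by norm_num) hC1
        _ = 0.06*Real.log 2 := Real.log_exp _
    linarith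
end

section
/- Let n ≥ 1, let λ ∈ [0,1] and N_E ≥ 0, and set G = (1−λ)·N_E + 1 and a = λ/((1−λ)·N_E + 1). Then 0 ≤ a ≤ 1, G ≥ 1, G·a = λ, and for every real 2n×2n matrix γ, G·(a·γ + (1−a)·I) + (G−1)·I = λ·γ + (1−λ)·(2·N_E+1)·I, where I is the 2n×2n identity matrix. -/
/-- **Covariance-matrix identity behind Lemma 3 of the paper** (`E_{λ,N_E} = A_G ∘ E_{a,0}`).
Let `n ≥ 1`, `λ ∈ [0,1]`, `N_E ≥ 0`, and set `G = (1−λ)·N_E + 1`, `a = λ/((1−λ)·N_E + 1)`.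
Then `0 ≤ a ≤ 1`, `G ≥ 1`, `G·a = λ`, and for every real `2n×2n` matrix `γ`,
`G·(a·γ + (1−a)·I) + (G−1)·I = λ·γ + (1−λ)·(2·N_E+1)·I`. -/
theorem thermal_channel_decomposition
    (n : ℕ) (hn : 1 ≤ n) (l N_E : ℝ) (hl : l ∈ Set.Icc (0 : ℝ) 1) (hNE : 0 ≤ N_E)
    (G a : ℝ) (hG : G = (1 - l) * N_E + 1) (ha : a = l / ((1 - l) * N_E + 1)) :
    0 ≤ a ∧ a ≤ 1 ∧ 1 ≤ G ∧ G * a = l ∧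
      ∀ γ : Matrix (Fin (2 * n)) (Fin (2 * n)) ℝ,
        G • (a • γ + (1 - a) • (1 : Matrix (Fin (2 * n)) (Fin (2 * n)) ℝ)) +
            (G - 1) • (1 : Matrix (Fin (2 * n)) (Fin (2 * n)) ℝ) =
          l • γ + ((1 - l) * (2 * N_E + 1)) • (1 : Matrix (Fin (2 * n)) (Fin (2 * n)) ℝ) := by
  obtain ⟨hl0, hl1⟩ := hl
  have hden : 0 < (1 - l) * N_E + 1 := by nlinarith
  have hGa : G * a = l := by
    rw [hG, ha]; field_simp
  refine ⟨?_, ?_, ?_, hGa, ?_⟩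
  · rw [ha]; positivity
  · rw [ha, div_le_one hden]; nlinarith
  · rw [hG]; nlinarith
  · intro γ
    rw [smul_add, smul_smul, smul_smul, hGa, add_assoc, ← add_smul]
    congr 1
    rw [hG, ha]; field_simp; ring
end

section
/- Define g(x) = (x+1)·ln(x+1) − x·ln x for x > 0 and g(0) = 0. Fix N ≥ 0 and ν > 0, and for λ ∈ (0,1) set N_E = ν/(1−λ). Then lim_{λ→1⁻} [ g(λ·N + (1−λ)·N_E) − ln(λ + (1−λ)·e^{g(N_E)}) ] = g(N+ν) − ln(1 + e·ν). -/
open Filter Topology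

lemma g_continuousAt {p : ℝ} (hp : 0 < p) : ContinuousAt g p := by
  have h1 : ContinuousAt (fun x : ℝ => (x + 1) * Real.log (x + 1)) p :=
    (continuousAt_id.add continuousAt_const).mul
      ((Real.continuousAt_log (by positivity)).comp (continuousAt_id.add continuousAt_const))
  have h2 : ContinuousAt (fun x : ℝ => x * Real.log x) p :=
    continuousAt_id.mul (Real.continuousAt_log hp.ne')
  exact h1.sub h2

lemma sub_tendsto : Tendsto (fun l : ℝ => 1 - l) (𝓝[<] (1 : ℝ)) (𝓝[>] (0 : ℝ)) := by
  rw [tendsto_nhdsWithin_iff]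
  constructor
  · have : Tendsto (fun l : ℝ => 1 - l) (𝓝 (1 : ℝ)) (𝓝 (1 - 1)) :=
      (continuous_const.sub continuous_id).tendsto 1
    simpa using this.mono_left nhdsWithin_le_nhds
  · filter_upwards [self_mem_nhdsWithin] with l hl
    simpa using (sub_pos.mpr (Set.mem_Iio.mp hl))

/-- **Classical-noise limit of the conjectured thermal-channel bound (Lemma 2).**
Fix `N ≥ 0` and `ν > 0`, and for `λ ∈ (0,1)` set `N_E = ν/(1−λ)`.  Then
`lim_{λ→1⁻} [g(λN + (1−λ)N_E) − ln(λ + (1−λ)e^{g(N_E)})] = g(N+ν) − ln(1 + e·ν)`. -/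
theorem classical_noise_limit (N ν : ℝ) (hN : 0 ≤ N) (hν : 0 < ν) :
    Tendsto
      (fun l : ℝ =>
        g (l * N + (1 - l) * (ν / (1 - l))) -
          Real.log (l + (1 - l) * Real.exp (g (ν / (1 - l)))))
      (𝓝[<] (1 : ℝ))
      (𝓝 (g (N + ν) - Real.log (1 + Real.exp 1 * ν))) := by
  have hmem : ∀ᶠ l : ℝ in 𝓝[<] (1 : ℝ), l < 1 := self_mem_nhdsWithin
  -- M l := ν / (1 - l) tends to atTop
  have hM : Tendsto (fun l : ℝ => ν / (1 - l)) (𝓝[<] (1 : ℝ)) atTop := by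
    have h := tendsto_inv_nhdsGT_zero.comp sub_tendsto
    have := h.const_mul_atTop hν
    simpa [Function.comp, div_eq_mul_inv] using this
  -- First term
  have hfirst : Tendsto (fun l : ℝ => g (l * N + (1 - l) * (ν / (1 - l))))
      (𝓝[<] (1 : ℝ)) (𝓝 (g (N + ν))) := by
    have hlin : Tendsto (fun l : ℝ => l * N + ν) (𝓝[<] (1 : ℝ)) (𝓝 (N + ν)) := by
      have : Tendsto (fun l : ℝ => l * N + ν) (𝓝 (1 : ℝ)) (𝓝 (1 * N + ν)) :=
        ((continuous_id.mul continuous_const).add continuous_const).tendsto 1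
      simpa using this.mono_left nhdsWithin_le_nhds
    have hc := (g_continuousAt (show (0:ℝ) < N + ν by positivity)).tendsto.comp hlin
    refine hc.congr' ?_
    filter_upwards [hmem] with l hl
    have h1 : (1 : ℝ) - l ≠ 0 := by linarith
    simp [Function.comp, mul_div_cancel₀ ν h1]
  -- Second term inner limit: (1-l) * exp (g (ν/(1-l))) → e * ν
  have hkey : Tendsto (fun l : ℝ => (1 - l) * Real.exp (g (ν / (1 - l))))
      (𝓝[<] (1 : ℝ)) (𝓝 (Real.exp 1 * ν)) := by
    have hexp1 : Tendsto (fun l : ℝ => Real.exp ((ν / (1 - l)) * Real.log (1 + 1 / (ν / (1 - l)))))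
        (𝓝[<] (1 : ℝ)) (𝓝 (Real.exp 1)) := by
      have := (Real.tendsto_mul_log_one_add_div_atTop (1 : ℝ)).comp hM
      exact (Real.continuous_exp.tendsto 1).comp this
    have hν2 : Tendsto (fun l : ℝ => ν + (1 - l)) (𝓝[<] (1 : ℝ)) (𝓝 ν) := by
      have : Tendsto (fun l : ℝ => ν + (1 - l)) (𝓝 (1 : ℝ)) (𝓝 (ν + (1 - 1))) :=
        (continuous_const.add (continuous_const.sub continuous_id)).tendsto 1
      simpa using this.mono_left nhdsWithin_le_nhds
    have hprod := hν2.mul hexp1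
    refine hprod.congr' ?_ |>.mono_right (by rw [mul_comm])
    filter_upwards [hmem] with l hl
    set t := 1 - l with ht
    have ht0 : (0 : ℝ) < t := by simp [ht]; linarith
    set M := ν / t with hMdef
    have hM0 : (0 : ℝ) < M := div_pos hν ht0
    have hM1 : (0 : ℝ) < M + 1 := by linarith
    -- g M = log (M+1) + M * log (1 + 1/M)
    have hg : g M = Real.log (M + 1) + M * Real.log (1 + 1 / M) := by
      have : Real.log (1 + 1 / M) = Real.log (M + 1) - Real.log M := by
        rw [← Real.log_div hM1.ne' hM0.ne']
        congr 1
        field_simp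
      rw [this, g]
      ring
    have hexp : Real.exp (g M) = (M + 1) * Real.exp (M * Real.log (1 + 1 / M)) := by
      rw [hg, Real.exp_add, Real.exp_log hM1]
    calc (ν + t) * Real.exp (M * Real.log (1 + 1 / M))
        = (t * (M + 1)) * Real.exp (M * Real.log (1 + 1 / M)) := by
          rw [hMdef]; field_simp
      _ = t * Real.exp (g M) := by rw [hexp]; ring
  -- Second term
  have hsecond : Tendsto (fun l : ℝ => Real.log (l + (1 - l) * Real.exp (g (ν / (1 - l)))))
      (𝓝[<] (1 : ℝ)) (𝓝 (Real.log (1 + Real.exp 1 * ν))) := by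
    have hid : Tendsto (fun l : ℝ => l) (𝓝[<] (1 : ℝ)) (𝓝 1) :=
      tendsto_id.mono_left nhdsWithin_le_nhds
    have hsum := hid.add hkey
    have hpos : (0 : ℝ) < 1 + Real.exp 1 * ν := by positivity
    exact (Real.continuousAt_log hpos.ne').tendsto.comp hsum
  exact hfirst.sub hsecond
end
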